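/- Let p and q be distinct prime numbers. For each n ≥ 0, let G_n be a p-primary torsion abelian group of finite p-rank, and suppose given homomorphisms f_n : G_n → G_{n+1} and g_n : G_{n+1} → G_n such that g_n ∘ f_n equals multiplication by q^{a_n} on G_n for some integer a_n ≥ 0. If there exists N ≥ 0 such that r_p(G_n) = r_p(G_N) for all n ≥ N, then there exists N' ≥ N such that f_n : G_n → G_{n+1} is an isomorphism for all n ≥ N'. -/

import Mathlib

/-- The `p`-torsion subgroup `G[p] = {x : G | p • x = 0}` of an abelian group `G`. -/
def pTorsion (p : ℕ) (G : Type*) [AddCommGroup G] : AddSubgroup G where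
  carrier := {x | p • x = 0}
  zero_mem' := smul_zero p
  add_mem' := by
    intro a b ha hb
    simp only [Set.mem_setOf_eq, smul_add] at *
    rw [ha, hb, add_zero]
  neg_mem' := by
    intro a ha
    simp only [Set.mem_setOf_eq, smul_neg] at *
    rw [ha, neg_zero]

/-- The `p`-rank of an abelian group `G`: the dimension of `G[p]` as an
`𝔽_p = ZMod p` vector space. -/
noncomputable def pRank (p : ℕ) (G : Type*) [AddCommGroup G] : ℕ :=
  letI : Module (ZMod p) (pTorsion p G) :=
    AddCommGroup.zmodModule (fun x => Subtype.ext (by simp; exact x.2))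
  Module.finrank (ZMod p) (pTorsion p G)

/-
Multiplication by `q ^ a` is an automorphism of a `p`-primary group, so `gₙ ∘ fₙ` is bijective.
Hence `fₙ` is injective and `x, z ↦ fₙ x + z` embeds `Gₙ[p] × (ker gₙ)[p]` into `Gₙ₊₁[p]`.
Once the `p`-ranks agree, counting forces `(ker gₙ)[p] = 0`, so the `p`-primary group
`ker gₙ` vanishes, `gₙ` is injective, and then `fₙ` is bijective.
-/

open Function

theorem bijective_nsmul_of_coprime {A : Type*} [AddGroup A] {p m : ℕ}
    (htors : ∀ x : A, ∃ k : ℕ, p ^ k • x = 0) (hpm : p.Coprime m) :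
    Bijective (fun x : A => m • x) :=
  (IsPGroup.powEquiv (G := Multiplicative A) htors hpm).bijective

theorem mem_pTorsion {p : ℕ} {A : Type*} [AddCommGroup A] {x : A} :
    x ∈ pTorsion p A ↔ p • x = 0 :=
  Iff.rfl

theorem card_pTorsion {p : ℕ} (hp : p.Prime) (A : Type*) [AddCommGroup A]
    [Finite (pTorsion p A)] : Nat.card (pTorsion p A) = p ^ pRank p A := by
  have := Fact.mk hp
  let : Module (ZMod p) (pTorsion p A) :=
    AddCommGroup.zmodModule (fun x => Subtype.ext (by simp; exact x.2))
  have : Fintype (pTorsion p A) := Fintype.ofFinite _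
  rw [Nat.card_eq_fintype_card, pRank]
  simpa only [ZMod.card] using Module.card_eq_pow_finrank (K := ZMod p) (V := pTorsion p A)

theorem AddSubgroup.eq_bot_of_inf_pTorsion_eq_bot {p : ℕ} {A : Type*} [AddCommGroup A]
    (htors : ∀ x : A, ∃ k : ℕ, p ^ k • x = 0) {H : AddSubgroup A}
    (hH : H ⊓ pTorsion p A = ⊥) : H = ⊥ := by
  have hpow : ∀ k, ∀ x ∈ H, p ^ k • x = 0 → x = 0 := by
    intro k
    induction k with
    | zero => intro x _ hx; simpa using hx
    | succ k ih =>
      intro x hx hpk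
      have hpx : p • x = 0 := ih (p • x) (H.nsmul_mem hx p) (by rwa [← mul_smul, ← pow_succ])
      have : x ∈ H ⊓ pTorsion p A := ⟨hx, hpx⟩
      rwa [hH, AddSubgroup.mem_bot] at this
  refine (AddSubgroup.eq_bot_iff_forall H).2 fun x hx => ?_
  obtain ⟨k, hk⟩ := htors x
  exact hpow k x hx hk

section Splitting

variable {p : ℕ} {A B : Type*} [AddCommGroup A] [AddCommGroup B] (f : A →+ B) (g : B →+ A)

theorem card_pTorsion_mul_card_ker_inf_pTorsion_le [Finite (pTorsion p B)]
    (hgf : Injective (g ∘ f)) :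
    Nat.card (pTorsion p A) * Nat.card ↥(g.ker ⊓ pTorsion p B) ≤ Nat.card (pTorsion p B) := by
  let φ : pTorsion p A × ↥(g.ker ⊓ pTorsion p B) → pTorsion p B := fun xz =>
    ⟨f xz.1 + xz.2, by
      rw [mem_pTorsion, smul_add, ← map_nsmul, mem_pTorsion.1 xz.1.2, map_zero, zero_add]
      exact xz.2.2.2⟩
  have hφ : Injective φ := by
    rintro ⟨x₁, z₁⟩ ⟨x₂, z₂⟩ h
    have h' : f x₁ + z₁ = f x₂ + z₂ := congrArg Subtype.val h
    have hx : x₁ = x₂ := by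
      apply Subtype.ext (hgf _)
      have := congrArg g h'
      rwa [map_add, map_add, z₁.2.1, z₂.2.1, add_zero, add_zero] at this
    subst hx
    exact Prod.ext rfl (Subtype.ext (add_left_cancel h'))
  rw [← Nat.card_prod]
  exact Nat.card_le_card_of_injective φ hφ

theorem ker_inf_pTorsion_eq_bot_of_pRank_eq (hp : p.Prime) [Finite (pTorsion p A)]
    [Finite (pTorsion p B)] (hgf : Injective (g ∘ f)) (hrank : pRank p B = pRank p A) :
    g.ker ⊓ pTorsion p B = ⊥ := by
  have hle := card_pTorsion_mul_card_ker_inf_pTorsion_le (p := p) f g hgf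
  rw [card_pTorsion hp A, card_pTorsion hp B, hrank] at hle
  have hpos : 0 < p ^ pRank p A := pow_pos hp.pos _
  have : Finite ↥(g.ker ⊓ pTorsion p B) :=
    Finite.of_injective _ (AddSubgroup.inclusion_injective inf_le_right)
  exact AddSubgroup.eq_bot_of_card_le _ (Nat.le_of_mul_le_mul_left (by rwa [mul_one]) hpos)

end Splitting

/-- Let `p ≠ q` be primes and `(G_n)` a tower of `p`-primary torsion
abelian groups of finite `p`-rank with maps `f_n : G_n → G_{n+1}`, `g_n : G_{n+1} → G_n`
such that `g_n ∘ f_n` is multiplication by `q ^ a_n` on `G_n`.  If the `p`-rank of `G_n`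
stabilizes for `n ≥ N`, then the maps `f_n` are isomorphisms for all large `n`. -/
theorem eventually_bijective_of_pRank_stabilizes
    (p q : ℕ) (hp : p.Prime) (hq : q.Prime) (hpq : p ≠ q)
    (G : ℕ → Type*) [∀ n, AddCommGroup (G n)]
    (htors : ∀ n, ∀ x : G n, ∃ k : ℕ, p ^ k • x = 0)
    (hfin : ∀ n, Finite (pTorsion p (G n)))
    (f : ∀ n, G n →+ G (n + 1)) (g : ∀ n, G (n + 1) →+ G n)
    (a : ℕ → ℕ) (hgf : ∀ n, ∀ x : G n, g n (f n x) = q ^ a n • x)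
    (N : ℕ) (hN : ∀ n ≥ N, pRank p (G n) = pRank p (G N)) :
    ∃ N' ≥ N, ∀ n ≥ N', Function.Bijective (f n) := by
  refine ⟨N, le_rfl, fun n hn => ?_⟩
  have hcomp : Bijective (g n ∘ f n) := by
    have hcop : p.Coprime (q ^ a n) := ((Nat.coprime_primes hp hq).2 hpq).pow_right _
    simpa only [comp_def, hgf] using bijective_nsmul_of_coprime (htors n) hcop
  have hrank : pRank p (G (n + 1)) = pRank p (G n) := by
    rw [hN n hn, hN (n + 1) (Nat.le_succ_of_le hn)]
  have := hfin n
  have := hfin (n + 1)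
  have hker : (g n).ker = ⊥ :=
    AddSubgroup.eq_bot_of_inf_pTorsion_eq_bot (htors (n + 1))
      (ker_inf_pTorsion_eq_bot_of_pRank_eq (f n) (g n) hp hcomp.1 hrank)
  exact hcomp.of_comp_left ((AddMonoidHom.ker_eq_bot_iff _).1 hker)
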